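/- arXiv:1911.12411 — 4 statements merged into one kernel-verified Lean document; each statement's English description precedes it below -/
import Mathlib

section
/- Suppose t is a vertex with d(u⇆t) ≤ R(u) and R(u) ≤ (k-1)·d(u⇆v). Then d(u⇆t) + d(t⇆v) ≤ (2k-1)·d(u⇆v). In particular, a subgraph containing shortest roundtrip paths from t to all other vertices yields a roundtrip path between u and v of length at most (2k-1)·d(u⇆v). -/
/-- Suppose `t` is a vertex with `d(u⇆t) ≤ R(u)` and `R(u) ≤ (k-1)·d(u⇆v)`, where
`d(·⇆·)` is the roundtrip distance (symmetric, nonnegative, satisfying the triangle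
inequality). Then `d(u⇆t) + d(t⇆v) ≤ (2k-1)·d(u⇆v)`; in particular a subgraph
containing shortest roundtrip paths from `t` to all vertices yields a roundtrip path
between `u` and `v` of length at most `(2k-1)·d(u⇆v)`. -/
theorem detour_through_hitting_vertex {V : Type*} (d : V → V → ℝ)
    (hsymm : ∀ x y : V, d x y = d y x)
    (hnonneg : ∀ x y : V, 0 ≤ d x y)
    (htri : ∀ x y z : V, d x z ≤ d x y + d y z)
    (k : ℕ) (hk : 1 ≤ k) (u v t : V) (R : ℝ)
    (hut : d u t ≤ R) (hR : R ≤ ((k : ℝ) - 1) * d u v) :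
    d u t + d t v ≤ (2 * (k : ℝ) - 1) * d u v := by
  have h1 : d t v ≤ d t u + d u v := htri t u v
  have h2 : d t u = d u t := hsymm t u
  nlinarith [hnonneg u v]
end

section
/- Consider a process on a finite vertex set that, in each round, selects a center u in the current set U, finds the minimum positive integer h with |Ball_U(u, h·step)| < n^{h/k}, adds at most 2·|Ball_U(u,h·step)| ≤ 2n^{h/k} tree edges, and removes the set B̄ = {v ∈ U : d_U(u⇆v) ≤ (h-1)·step} (which has size ≥ n^{(h-1)/k} and contains u) from U. Then the total number of edges added over all rounds is at most 2·n^{1/k}·n = O(n^{1+1/k}). -/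
/-!
Charge the edges of each round to the vertices it removes. Since
`n^{h/k} = n^{1/k} · n^{(h-1)/k}` and round `i` removes at least `n^{(h i - 1)/k}` vertices, it
adds at most `2 n^{1/k}` edges per removed vertex; the removed sets are disjoint, so at most `n`
vertices are ever charged.
-/

open Finset Function

lemma Real.rpow_div_eq_rpow_one_div_mul {x h k : ℝ} (hx : 0 ≤ x) (hh : 1 ≤ h) (hk : 0 ≤ k) :
    x ^ (h / k) = x ^ (1 / k) * x ^ ((h - 1) / k) := by
  rw [← Real.rpow_add_of_nonneg hx (by positivity) (div_nonneg (sub_nonneg.2 hh) hk)]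
  ring_nf

lemma Finset.sum_card_le_card_of_pairwise_disjoint {ι V : Type*} [Fintype V] [DecidableEq V]
    (s : Finset ι) {B : ι → Finset V} (hB : Pairwise (Disjoint on B)) :
    ∑ i ∈ s, #(B i) ≤ Fintype.card V := by
  rw [← card_biUnion fun i _ j _ hij => hB hij]
  exact card_le_univ _

lemma Finset.sum_le_mul_card_of_le_mul_card {ι V : Type*} [Fintype V] [DecidableEq V]
    (s : Finset ι) {B : ι → Finset V} (hB : Pairwise (Disjoint on B)) {e : ι → ℝ} {c : ℝ}
    (hc : 0 ≤ c) (he : ∀ i, e i ≤ c * #(B i)) :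
    ∑ i ∈ s, e i ≤ c * Fintype.card V :=
  calc ∑ i ∈ s, e i ≤ ∑ i ∈ s, c * #(B i) := sum_le_sum fun i _ => he i
    _ = c * ((∑ i ∈ s, #(B i) : ℕ) : ℝ) := by rw [← mul_sum, Nat.cast_sum]
    _ ≤ c * Fintype.card V := by
      gcongr
      exact sum_card_le_card_of_pairwise_disjoint s hB

theorem cover_size_bound_general {V : Type*} [Fintype V] [DecidableEq V]
    (k : ℕ) (T : ℕ)
    (h : Fin T → ℕ) (hh : ∀ i, 1 ≤ h i)
    (B : Fin T → Finset V)
    (hdisj : ∀ i j, i ≠ j → Disjoint (B i) (B j))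
    (hB : ∀ i, (Fintype.card V : ℝ) ^ (((h i : ℝ) - 1) / (k : ℝ)) ≤ ((B i).card : ℝ))
    (e : Fin T → ℕ)
    (he : ∀ i, (e i : ℝ) ≤ 2 * (Fintype.card V : ℝ) ^ ((h i : ℝ) / (k : ℝ))) :
    (∑ i, (e i : ℝ)) ≤ 2 * (Fintype.card V : ℝ) ^ ((1 : ℝ) / (k : ℝ)) * Fintype.card V := by
  set n : ℝ := (Fintype.card V : ℝ)
  have hn : 0 ≤ n := Nat.cast_nonneg _
  refine sum_le_mul_card_of_le_mul_card univ (fun i j hij => hdisj i j hij) (by positivity)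
    fun i => ?_
  calc (e i : ℝ) ≤ 2 * n ^ ((h i : ℝ) / k) := he i
    _ = 2 * n ^ ((1 : ℝ) / k) * n ^ (((h i : ℝ) - 1) / k) := by
      rw [Real.rpow_div_eq_rpow_one_div_mul hn (mod_cast hh i) k.cast_nonneg, mul_assoc]
    _ ≤ 2 * n ^ ((1 : ℝ) / k) * #(B i) := by gcongr; exact hB i

/-- Size bound for the ball-growing process: over `T` rounds on an `n`-vertex set, round
`i` picks an integer `h i ≥ 1`, adds `e i ≤ 2·n^{h i/k}` tree edges, and removes a set
`B i` of size at least `n^{(h i - 1)/k}`; the removed sets are pairwise disjoint. Then the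
total number of edges added over all rounds is at most `2·n^{1/k}·n = O(n^{1+1/k})`. -/
theorem cover_size_bound {V : Type*} [Fintype V] [DecidableEq V]
    (k : ℕ) (hk : 1 ≤ k) (T : ℕ)
    (h : Fin T → ℕ) (hh : ∀ i, 1 ≤ h i)
    (B : Fin T → Finset V)
    (hdisj : ∀ i j, i ≠ j → Disjoint (B i) (B j))
    (hB : ∀ i, (Fintype.card V : ℝ) ^ (((h i : ℝ) - 1) / (k : ℝ)) ≤ ((B i).card : ℝ))
    (e : Fin T → ℕ)
    (he : ∀ i, (e i : ℝ) ≤ 2 * (Fintype.card V : ℝ) ^ ((h i : ℝ) / (k : ℝ))) :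
    (∑ i, (e i : ℝ)) ≤ 2 * (Fintype.card V : ℝ) ^ ((1 : ℝ) / (k : ℝ)) * Fintype.card V :=
  cover_size_bound_general k T h hh B hdisj hB e he
end

section
/- In each round of the Cover procedure, the chosen integer h satisfies h ≤ k-1: if step ≤ R(u)/(k-1) and |Ball(u,R(u))| < n^{1-1/k} in the full graph G, then |Ball_U(u,(k-1)·step)| < n^{(k-1)/k}, so the minimum positive h with |Ball_U(u,h·step)| < n^{h/k} is at most k-1. -/
open scoped Classical

/-- In each round of the Cover procedure the chosen integer `h` satisfies `h ≤ k-1`: if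
`step ≤ R(u)/(k-1)`, the roundtrip distances `dU` in the induced subgraph `G[U]` are at
least the distances `d` in the full graph `G`, and `|Ball(u,R(u))| < n^{1-1/k}` in `G`,
then `|Ball_U(u,(k-1)·step)| < n^{(k-1)/k}`, so the minimum positive `h` with
`|Ball_U(u,h·step)| < n^{h/k}` is at most `k-1`. -/
theorem cover_h_le_k_sub_one {V : Type*} [Fintype V] [DecidableEq V]
    (d dU : V → V → ℝ) (hmono : ∀ x y : V, d x y ≤ dU x y)
    (U : Finset V) (u : V) (k : ℕ) (hk : 2 ≤ k)
    (R step : ℝ) (hstep : step ≤ R / ((k : ℝ) - 1))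
    (hR : ((Finset.univ.filter fun v : V => d u v < R).card : ℝ)
        < (Fintype.card V : ℝ) ^ (1 - 1 / (k : ℝ))) :
    ((U.filter fun v : V => dU u v < ((k : ℝ) - 1) * step).card : ℝ)
        < (Fintype.card V : ℝ) ^ (((k : ℝ) - 1) / (k : ℝ)) ∧
    ∃ h : ℕ, 1 ≤ h ∧ h ≤ k - 1 ∧
      ((U.filter fun v : V => dU u v < (h : ℝ) * step).card : ℝ)
        < (Fintype.card V : ℝ) ^ ((h : ℝ) / (k : ℝ)) := by
  have hkpos : (0:ℝ) < (k:ℝ) - 1 := by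
    have : (2:ℝ) ≤ (k:ℝ) := by exact_mod_cast hk
    linarith
  have hkR : ((k:ℝ) - 1) * step ≤ R := by
    have := (le_div_iff₀ hkpos).mp hstep
    linarith [this]
  have hsub : (U.filter fun v : V => dU u v < ((k : ℝ) - 1) * step) ⊆
      (Finset.univ.filter fun v : V => d u v < R) := by
    intro v hv
    simp only [Finset.mem_filter] at hv ⊢
    refine ⟨Finset.mem_univ v, ?_⟩
    calc d u v ≤ dU u v := hmono u v
      _ < ((k:ℝ) - 1) * step := hv.2
      _ ≤ R := hkR
  have hexp : 1 - 1 / (k : ℝ) = ((k : ℝ) - 1) / (k : ℝ) := by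
    field_simp
  have hmain : ((U.filter fun v : V => dU u v < ((k : ℝ) - 1) * step).card : ℝ)
      < (Fintype.card V : ℝ) ^ (((k : ℝ) - 1) / (k : ℝ)) := by
    rw [← hexp]
    calc ((U.filter fun v : V => dU u v < ((k : ℝ) - 1) * step).card : ℝ)
        ≤ ((Finset.univ.filter fun v : V => d u v < R).card : ℝ) := by
          exact_mod_cast Finset.card_le_card hsub
      _ < _ := hR
  refine ⟨hmain, k - 1, ?_, le_refl _, ?_⟩
  · omega
  · have hcast : ((k - 1 : ℕ) : ℝ) = (k : ℝ) - 1 := by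
      have : 1 ≤ k := by omega
      push_cast [Nat.cast_sub this]
      ring
    rw [hcast]
    exact hmain
end

section
/- Stretch bound for the Cover procedure: for vertices u,v with d(u⇆v) ∈ [L/(1+ε), L) where 0 < ε ≤ 1/(2k-2), either the edge set returned by Cover(G,k,L,ε) contains a roundtrip path between u and v of length at most (2k-2)(1+ε)·d(u⇆v) ≤ (2k-1)·d(u⇆v), or R(u) ≤ (k-1)·d(u⇆v). -/
open scoped ENNReal NNReal Classical

/-- The length of a walk, given as the list of vertices it visits, with respect to an
edge-weight function `wt` (`wt x y = ∞` encodes the absence of the edge `(x,y)`). -/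
noncomputable def walkLen {V : Type*} (wt : V → V → ℝ≥0∞) : List V → ℝ≥0∞
  | [] => 0
  | [_] => 0
  | a :: b :: t => wt a b + walkLen wt (b :: t)

/-- `l` is a directed walk from `u` to `v` staying inside the vertex set `S`. -/
def IsWalkIn {V : Type*} (S : Set V) (u v : V) (l : List V) : Prop :=
  l.head? = some u ∧ l.getLast? = some v ∧ ∀ x ∈ l, x ∈ S

/-- One-way shortest path distance from `u` to `v` in the subgraph induced by `S`. -/
noncomputable def owdist {V : Type*} (wt : V → V → ℝ≥0∞) (S : Set V) (u v : V) : ℝ≥0∞ :=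
  ⨅ (l : List V) (_ : IsWalkIn S u v l), walkLen wt l

/-- Roundtrip distance between `u` and `v` in the subgraph induced by `S`. -/
noncomputable def rtdist {V : Type*} (wt : V → V → ℝ≥0∞) (S : Set V) (u v : V) : ℝ≥0∞ :=
  owdist wt S u v + owdist wt S v u

/-- Weight function of the subgraph obtained by keeping only the edges in `E`. -/
noncomputable def restrictE {V : Type*} (wt : V → V → ℝ≥0∞) (E : Set (V × V)) :
    V → V → ℝ≥0∞ :=
  fun x y => if (x, y) ∈ E then wt x y else ⊤

/-! If `R u > (k-1)·d(u⇆v)`, take a closed walk `W` through `u` and `v` only slightly longer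
than `d(u⇆v)`, and the first round `i` removing a vertex `w` of `W`. Then `W` lies in `U i`,
so `R (c i) ≥ R u` and `step i > d(u⇆v)` exceeds the length of `W`. As `w` is within
`(h i - 1)·step i` of `c i`, all of `W` lies in `Ball_{U i}(c i, h i·step i)`, and the shortest
path trees of round `i` give a roundtrip between `u` and `v` through `c i` of length at most
`2 h i·step i ≤ 2 h i·L ≤ 2 h i·(1+ε)·d(u⇆v)`. Finally `h i ≤ k - 1`: otherwise the
minimality of `h i` gives `|Ball_{U i}(c i, (k-1)·step i)| ≥ n^{1-1/k}`, while this ball lies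
in `Ball(c i, R (c i))`. -/

section Walks

variable {V : Type*} {wt : V → V → ℝ≥0∞} {S : Set V} {a b c u w x : V}

theorem walkLen_append :
    ∀ (l₁ : List V) {b : V} (l₂ : List V), l₁.getLast? = some b →
      walkLen wt (l₁ ++ l₂) = walkLen wt l₁ + walkLen wt (b :: l₂)
  | [], _, _, hb => by simp at hb
  | [a], b, l₂, hb => by
      obtain rfl : a = b := by simpa using hb
      cases l₂ <;> simp [walkLen]
  | a :: a' :: t, b, l₂, hb => by
      have ih := walkLen_append (a' :: t) l₂ (by simpa using hb)
      simp only [List.cons_append, walkLen] at ih ⊢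
      rw [ih, add_assoc]

theorem walkLen_append_tail {l₁ l₂ : List V} (h₁ : l₁.getLast? = some b)
    (h₂ : l₂.head? = some b) :
    walkLen wt (l₁ ++ l₂.tail) = walkLen wt l₁ + walkLen wt l₂ := by
  obtain ⟨t, rfl⟩ := List.head?_eq_some_iff.1 h₂
  exact walkLen_append l₁ t h₁

theorem walkLen_append_cons (l₁ : List V) (b : V) (l₂ : List V) :
    walkLen wt (l₁ ++ b :: l₂) = walkLen wt (l₁ ++ [b]) + walkLen wt (b :: l₂) := by
  simpa using walkLen_append (wt := wt) (l₁ ++ [b]) l₂ List.getLast?_concat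

theorem IsWalkIn.append {l₁ l₂ : List V} (h₁ : IsWalkIn S a b l₁) (h₂ : IsWalkIn S b c l₂) :
    IsWalkIn S a c (l₁ ++ l₂.tail) := by
  obtain ⟨t, rfl⟩ := List.head?_eq_some_iff.1 h₂.1
  refine ⟨?_, ?_, ?_⟩
  · rw [List.head?_append_of_ne_nil _ (by rintro rfl; simp [IsWalkIn] at h₁)]
    exact h₁.1
  · cases t with
    | nil => simpa using h₁.2.1.trans (by simpa using h₂.2.1)
    | cons y t => rw [List.tail_cons, List.getLast?_append_of_ne_nil _ (by simp)]; exact h₂.2.1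
  · simp only [List.tail_cons, List.mem_append]
    rintro z (hz | hz)
    exacts [h₁.2.2 z hz, h₂.2.2 z (List.mem_cons_of_mem _ hz)]

theorem IsWalkIn.split {l₁ l₂ : List V} (h : IsWalkIn S a c (l₁ ++ b :: l₂)) :
    IsWalkIn S a b (l₁ ++ [b]) ∧ IsWalkIn S b c (b :: l₂) := by
  obtain ⟨hhead, hlast, hmem⟩ := h
  refine ⟨⟨?_, List.getLast?_concat, fun z hz => hmem z ?_⟩, ⟨rfl, ?_, fun z hz => hmem z ?_⟩⟩
  · cases l₁ <;> simpa using hhead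
  · simp only [List.mem_append, List.mem_singleton] at hz ⊢; aesop
  · cases l₂ with
    | nil => simpa using hlast
    | cons y t => rwa [List.getLast?_append_of_ne_nil _ (by simp)] at hlast
  · simp [hz]

theorem owdist_le_walkLen {l : List V} (hl : IsWalkIn S a b l) :
    owdist wt S a b ≤ walkLen wt l :=
  iInf₂_le l hl

theorem owdist_add_owdist (a b b' c : V) :
    owdist wt S a b + owdist wt S b' c
      = ⨅ (l₁ : List V) (_ : IsWalkIn S a b l₁) (l₂ : List V) (_ : IsWalkIn S b' c l₂),
          walkLen wt l₁ + walkLen wt l₂ := by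
  simp only [owdist, ENNReal.iInf_add]
  simp only [ENNReal.add_iInf]

theorem owdist_triangle (a b c : V) :
    owdist wt S a c ≤ owdist wt S a b + owdist wt S b c := by
  rw [owdist_add_owdist]
  refine le_iInf₂ fun l₁ h₁ => le_iInf₂ fun l₂ h₂ => ?_
  rw [← walkLen_append_tail h₁.2.1 h₂.1]
  exact owdist_le_walkLen (h₁.append h₂)

theorem owdist_anti {T : Set V} (hST : S ⊆ T) (a b : V) :
    owdist wt T a b ≤ owdist wt S a b :=
  le_iInf₂ fun _ hl => owdist_le_walkLen ⟨hl.1, hl.2.1, fun z hz => hST (hl.2.2 z hz)⟩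

theorem rtdist_comm (a b : V) : rtdist wt S a b = rtdist wt S b a :=
  add_comm _ _

theorem rtdist_triangle (a b c : V) :
    rtdist wt S a c ≤ rtdist wt S a b + rtdist wt S b c :=
  calc rtdist wt S a c
      ≤ (owdist wt S a b + owdist wt S b c) + (owdist wt S c b + owdist wt S b a) :=
        add_le_add (owdist_triangle a b c) (owdist_triangle c b a)
    _ = rtdist wt S a b + rtdist wt S b c := by simp only [rtdist]; ring

theorem rtdist_anti {T : Set V} (hST : S ⊆ T) (a b : V) :
    rtdist wt T a b ≤ rtdist wt S a b :=
  add_le_add (owdist_anti hST a b) (owdist_anti hST b a)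

theorem IsWalkIn.owdist_add_owdist_le {l : List V} (hl : IsWalkIn S a c l) (hb : b ∈ l) :
    owdist wt S a b + owdist wt S b c ≤ walkLen wt l := by
  obtain ⟨l₁, l₂, rfl⟩ := List.append_of_mem hb
  obtain ⟨h₁, h₂⟩ := hl.split
  rw [walkLen_append_cons]
  exact add_le_add (owdist_le_walkLen h₁) (owdist_le_walkLen h₂)

theorem IsWalkIn.exists_rotate {W : List V} (hW : IsWalkIn S u u W) (hw : w ∈ W) :
    ∃ W', IsWalkIn S w w W' ∧ walkLen wt W' = walkLen wt W ∧ ∀ x ∈ W, x ∈ W' := by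
  obtain ⟨l₁, l₂, rfl⟩ := List.append_of_mem hw
  obtain ⟨h₁, h₂⟩ := hW.split
  refine ⟨(w :: l₂) ++ (l₁ ++ [w]).tail, h₂.append h₁, ?_, fun x hx => ?_⟩
  · rw [walkLen_append_tail h₂.2.1 h₁.1, walkLen_append_cons l₁ w l₂, add_comm]
  · obtain ⟨t, ht⟩ := List.head?_eq_some_iff.1 h₁.1
    have hu : u ∈ w :: l₂ := List.mem_of_mem_getLast? h₂.2.1
    have hx' : x ∈ u :: t ∨ x ∈ w :: l₂ := by
      rw [← ht]; simp only [List.mem_append, List.mem_cons] at hx ⊢; tauto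
    rw [ht, List.tail_cons, List.mem_append]
    rcases hx' with hx | hx
    · rcases List.mem_cons.1 hx with rfl | hx
      exacts [Or.inl hu, Or.inr hx]
    · exact Or.inl hx

theorem rtdist_le_walkLen_of_mem {W : List V} (hW : IsWalkIn S u u W) (hw : w ∈ W)
    (hx : x ∈ W) : rtdist wt S w x ≤ walkLen wt W := by
  obtain ⟨W', hW', hlen, hsub⟩ := hW.exists_rotate (wt := wt) hw
  rw [← hlen]
  exact hW'.owdist_add_owdist_le (hsub x hx)

theorem exists_closedWalk_lt {X : ℝ≥0∞} (h : rtdist wt S u x < X) :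
    ∃ W, IsWalkIn S u u W ∧ x ∈ W ∧ walkLen wt W < X := by
  rw [rtdist, owdist_add_owdist] at h
  simp only [iInf_lt_iff] at h
  obtain ⟨l₁, h₁, l₂, h₂, hlt⟩ := h
  refine ⟨l₁ ++ l₂.tail, h₁.append h₂, List.mem_append_left _ (List.mem_of_mem_getLast? h₁.2.1),
    ?_⟩
  rwa [walkLen_append_tail h₁.2.1 h₂.1]

end Walks

theorem Nat.exists_lt_and_not_succ_of_not {p : ℕ → Prop} {T : ℕ} (h0 : p 0) (hT : ¬ p T) :
    ∃ i < T, p i ∧ ¬ p (i + 1) := by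
  induction T with
  | zero => exact absurd h0 hT
  | succ T ih =>
    by_cases hpT : p T
    · exact ⟨T, T.lt_succ_self, hpT, hT⟩
    · obtain ⟨i, hi, hpi⟩ := ih hpT
      exact ⟨i, hi.trans T.lt_succ_self, hpi⟩

theorem exists_gt_forall_le_of_gt {α : Type*} [LinearOrder α] [OrderTop α] {d : α}
    (hd : d < ⊤) (f : ℕ → α) (T : ℕ) : ∃ m, d < m ∧ ∀ i < T, d < f i → m ≤ f i :=
  ⟨((Finset.range T).filter (d < f ·)).inf f,
    (Finset.lt_inf_iff hd).2 fun _ hi => (Finset.mem_filter.1 hi).2,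
    fun _ hi hdi => Finset.inf_le (by simp [hi, hdi])⟩

theorem ENNReal.lt_min_div_of_mul_lt {k : ℕ} (hk : 2 ≤ k) {d r L : ℝ≥0∞}
    (hr : ((k - 1 : ℕ) : ℝ≥0∞) * d < r) (hL : d < L) : d < min (r / ((k : ℝ≥0∞) - 1)) L := by
  refine lt_min ?_ hL
  rw [← Nat.cast_one, ← ENNReal.natCast_sub, ENNReal.lt_div_iff_mul_lt
    (Or.inl (Nat.cast_ne_zero.2 (by omega))) (Or.inl (ENNReal.natCast_ne_top _)), mul_comm]
  exact hr

theorem ENNReal.natCast_sub_one_mul_min_div_le (k : ℕ) (r L : ℝ≥0∞) :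
    ((k - 1 : ℕ) : ℝ≥0∞) * min (r / ((k : ℝ≥0∞) - 1)) L ≤ r := by
  rw [ENNReal.natCast_sub, Nat.cast_one]
  exact (mul_le_mul_right (min_le_left _ _) _).trans ENNReal.mul_div_le

section Cover

variable {V : Type*} {wt : V → V → ℝ≥0∞} {S : Set V} {c u w x : V}

theorem rtdist_lt_of_mem_closedWalk {W : List V} {h : ℕ} {s : ℝ≥0∞}
    (hW : IsWalkIn S u u W) (hwW : w ∈ W) (hxW : x ∈ W)
    (hw : rtdist wt S c w ≤ ((h - 1 : ℕ) : ℝ≥0∞) * s) (hlen : walkLen wt W < s)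
    (hs : s ≠ ⊤) (hh : 1 ≤ h) : rtdist wt S c x < h * s :=
  calc rtdist wt S c x ≤ rtdist wt S c w + rtdist wt S w x := rtdist_triangle c w x
    _ ≤ ((h - 1 : ℕ) : ℝ≥0∞) * s + walkLen wt W :=
        add_le_add hw (rtdist_le_walkLen_of_mem hW hwW hxW)
    _ < ((h - 1 : ℕ) : ℝ≥0∞) * s + s :=
        ENNReal.add_lt_add_left (ENNReal.mul_ne_top (ENNReal.natCast_ne_top _) hs) hlen
    _ = h * s := by rw [← add_one_mul, ← Nat.cast_add_one, Nat.sub_add_cancel hh]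

theorem rtdist_le_of_owdist_le {wt' : V → V → ℝ≥0∞} {S' : Set V} {v : V}
    (hu : owdist wt' S' c u ≤ owdist wt S c u ∧ owdist wt' S' u c ≤ owdist wt S u c)
    (hv : owdist wt' S' c v ≤ owdist wt S c v ∧ owdist wt' S' v c ≤ owdist wt S v c) :
    rtdist wt' S' u v ≤ rtdist wt S c u + rtdist wt S c v :=
  calc rtdist wt' S' u v ≤ rtdist wt' S' c u + rtdist wt' S' c v := by
        rw [rtdist_comm c u]; exact rtdist_triangle u c v
    _ ≤ rtdist wt S c u + rtdist wt S c v :=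
        add_le_add (add_le_add hu.1 hu.2) (add_le_add hv.1 hv.2)

theorem exists_round_removing_mem [DecidableEq V] {T : ℕ} {U : ℕ → Finset V} {c : ℕ → V}
    {r : ℕ → ℝ≥0∞}
    (hrem : ∀ i < T, U (i + 1)
      = U i \ ((U i).filter fun v : V => rtdist wt (U i : Set V) (c i) v ≤ r i))
    {W : List V} (hW0 : ∀ z ∈ W, z ∈ U 0) (hWT : ∃ z ∈ W, z ∉ U T) :
    ∃ i < T, (∀ z ∈ W, z ∈ U i) ∧ ∃ w ∈ W, rtdist wt (U i : Set V) (c i) w ≤ r i := by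
  obtain ⟨i, hiT, hWi, hWrem⟩ :=
    Nat.exists_lt_and_not_succ_of_not (p := fun j => ∀ z ∈ W, z ∈ U j) hW0 (by simpa using hWT)
  simp only [not_forall] at hWrem
  obtain ⟨w, hwW, hw⟩ := hWrem
  exact ⟨i, hiT, hWi, w, hwW, by simpa [hrem i hiT, hWi w hwW] using hw⟩

theorem le_sub_one_of_card_ball_lt [Fintype V] {U : Finset V} {k h : ℕ} {s r : ℝ≥0∞}
    (hk : 2 ≤ k) (hsr : ((k - 1 : ℕ) : ℝ≥0∞) * s ≤ r)
    (hball : ((Finset.univ.filter fun v : V => rtdist wt Set.univ c v < r).card : ℝ)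
      < (Fintype.card V : ℝ) ^ (1 - 1 / (k : ℝ)))
    (hgrowth : ∀ j : ℕ, 1 ≤ j → j < h →
      (Fintype.card V : ℝ) ^ ((j : ℝ) / (k : ℝ))
        ≤ ((U.filter fun v : V => rtdist wt (U : Set V) c v < (j : ℝ≥0∞) * s).card : ℝ)) :
    h ≤ k - 1 := by
  by_contra! hhk
  have hsub : (U.filter fun v : V => rtdist wt (U : Set V) c v < ((k - 1 : ℕ) : ℝ≥0∞) * s)
      ⊆ Finset.univ.filter fun v : V => rtdist wt Set.univ c v < r := fun v hv => by
    simp only [Finset.mem_filter, Finset.mem_univ, true_and] at hv ⊢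
    exact ((rtdist_anti (Set.subset_univ _) c v).trans_lt hv.2).trans_le hsr
  have hexp : ((k - 1 : ℕ) : ℝ) / k = 1 - 1 / k := by
    have : (k : ℝ) ≠ 0 := by positivity
    rw [Nat.cast_sub (by omega), Nat.cast_one]
    field_simp
  have hgrowth_k := hgrowth (k - 1) (by omega) hhk
  rw [hexp] at hgrowth_k
  have hcard := (Nat.cast_le (α := ℝ)).2 (Finset.card_le_card hsub)
  linarith

end Cover

theorem cover_stretch_general {V : Type*} [Fintype V] [DecidableEq V]
    (wt : V → V → ℝ≥0∞) (k : ℕ) (hk : 2 ≤ k)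
    (L : ℝ≥0∞) (ε : ℝ≥0)
    (R : V → ℝ≥0∞)
    (hRball : ∀ u : V,
      ((Finset.univ.filter fun v : V => rtdist wt Set.univ u v < R u).card : ℝ)
        < (Fintype.card V : ℝ) ^ (1 - 1 / (k : ℝ)))
    (T : ℕ) (U : ℕ → Finset V) (c : ℕ → V) (h : ℕ → ℕ) (step : ℕ → ℝ≥0∞)
    (hU0 : U 0 = Finset.univ) (hUT : U T = ∅)
    (hc : ∀ i < T, c i ∈ U i ∧ ∀ x ∈ U i, R x ≤ R (c i))
    (hstep : ∀ i < T, step i = min (R (c i) / (((k : ℝ≥0∞)) - 1)) L)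
    (hh : ∀ i < T, 1 ≤ h i ∧
      (((U i).filter fun v : V =>
          rtdist wt (U i : Set V) (c i) v < (h i : ℝ≥0∞) * step i).card : ℝ)
        < (Fintype.card V : ℝ) ^ ((h i : ℝ) / (k : ℝ)) ∧
      ∀ j : ℕ, 1 ≤ j → j < h i →
        (Fintype.card V : ℝ) ^ ((j : ℝ) / (k : ℝ))
          ≤ (((U i).filter fun v : V =>
              rtdist wt (U i : Set V) (c i) v < (j : ℝ≥0∞) * step i).card : ℝ))
    (hrem : ∀ i < T, U (i + 1)
      = U i \ ((U i).filter fun v : V =>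
          rtdist wt (U i : Set V) (c i) v ≤ ((h i - 1 : ℕ) : ℝ≥0∞) * step i))
    (Eh : Set (V × V))
    (hEh : ∀ i < T, ∀ x ∈ U i,
      rtdist wt (U i : Set V) (c i) x < (h i : ℝ≥0∞) * step i →
        owdist (restrictE wt Eh) Set.univ (c i) x ≤ owdist wt (U i : Set V) (c i) x ∧
        owdist (restrictE wt Eh) Set.univ x (c i) ≤ owdist wt (U i : Set V) x (c i)) :
    ∀ u v : V,
      L / (1 + (ε : ℝ≥0∞)) ≤ rtdist wt Set.univ u v →
      rtdist wt Set.univ u v < L →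
      rtdist (restrictE wt Eh) Set.univ u v
          ≤ ((2 * k - 2 : ℕ) : ℝ≥0∞) * (1 + (ε : ℝ≥0∞)) * rtdist wt Set.univ u v ∨
      R u ≤ ((k - 1 : ℕ) : ℝ≥0∞) * rtdist wt Set.univ u v := by
  intro u v hLd hdL
  set d := rtdist wt Set.univ u v
  refine or_iff_not_imp_right.2 fun hRu => ?_
  rw [not_le] at hRu
  have hL : L ≤ (1 + (ε : ℝ≥0∞)) * d := by
    rwa [ENNReal.div_le_iff_le_mul (Or.inl (by simp)) (Or.inl (by simp)), mul_comm] at hLd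
  have hLtop : L ≠ ⊤ := ne_top_of_le_ne_top (by finiteness) hL
  -- `W` is shorter than every step exceeding `d`, in particular than the step of the round
  -- that first removes one of its vertices.
  obtain ⟨m, hdm, hm⟩ := exists_gt_forall_le_of_gt (hdL.trans_le le_top) step T
  obtain ⟨W, hW, hvW, hWm⟩ := exists_closedWalk_lt hdm
  have huW : u ∈ W := List.mem_of_mem_head? hW.1
  obtain ⟨i, hiT, hWi, w, hwW, hw⟩ := exists_round_removing_mem hrem (by simp [hU0])
    ⟨u, huW, by simp [hUT]⟩
  have hstep_i : d < step i := hstep i hiT ▸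
    ENNReal.lt_min_div_of_mul_lt hk (hRu.trans_le ((hc i hiT).2 u (hWi u huW))) hdL
  have hstepL : step i ≤ L := hstep i hiT ▸ min_le_right _ _
  have hWstep : walkLen wt W < step i := hWm.trans_le (hm i hiT hstep_i)
  have hball : ∀ z ∈ W, rtdist wt (U i) (c i) z < h i * step i := fun z hz =>
    rtdist_lt_of_mem_closedWalk ⟨hW.1, hW.2.1, hWi⟩ hwW hz hw hWstep
      (ne_top_of_le_ne_top hLtop hstepL) (hh i hiT).1
  have hhk : h i ≤ k - 1 := le_sub_one_of_card_ball_lt hk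
    (hstep i hiT ▸ ENNReal.natCast_sub_one_mul_min_div_le k _ L) (hRball (c i)) (hh i hiT).2.2
  calc rtdist (restrictE wt Eh) Set.univ u v
      ≤ rtdist wt (U i) (c i) u + rtdist wt (U i) (c i) v :=
        rtdist_le_of_owdist_le (hEh i hiT u (hWi u huW) (hball u huW))
          (hEh i hiT v (hWi v hvW) (hball v hvW))
    _ ≤ ((2 * h i : ℕ) : ℝ≥0∞) * step i := by
        push_cast; rw [two_mul, add_mul]; exact add_le_add (hball u huW).le (hball v hvW).le
    _ ≤ ((2 * k - 2 : ℕ) : ℝ≥0∞) * (1 + (ε : ℝ≥0∞)) * d := by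
        rw [mul_assoc]; gcongr; exacts [by omega, hstepL.trans hL]

/-- Stretch bound for the Cover procedure. `R u` is the maximum radius whose roundtrip
ball around `u` in `G` has fewer than `n^{1-1/k}` vertices. A run of `Cover(G,k,L,ε)` is
given by rounds `i = 0,…,T-1` with remaining vertex sets `U i` (from `U 0 = V` down to
`U T = ∅`), centers `c i` maximizing `R` over `U i`, steps
`step i = min (R (c i)/(k-1)) L`, and minimal positive integers `h i` with
`|Ball_{U i}(c i, h i · step i)| < n^{h i/k}`; round `i` removes the closed ball of radius
`(h i - 1)·step i` and adds to the output `Eh` inward and outward shortest path trees,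
so that `Eh` realizes the `G[U i]`-distances between `c i` and every vertex of
`Ball_{U i}(c i, h i · step i)`. Then for every pair `u, v` with
`d(u⇆v) ∈ [L/(1+ε), L)`, either the returned edge set `Eh` yields a roundtrip path
between `u` and `v` of length at most `(2k-2)(1+ε)·d(u⇆v)`, or
`R u ≤ (k-1)·d(u⇆v)`. -/
theorem cover_stretch {V : Type*} [Fintype V] [DecidableEq V]
    (wt : V → V → ℝ≥0∞) (k : ℕ) (hk : 2 ≤ k)
    (L : ℝ≥0∞) (ε : ℝ≥0) (hε0 : 0 < ε) (hε : (ε : ℝ) ≤ 1 / (2 * (k : ℝ) - 2))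
    (R : V → ℝ≥0∞)
    (hRball : ∀ u : V,
      ((Finset.univ.filter fun v : V => rtdist wt Set.univ u v < R u).card : ℝ)
        < (Fintype.card V : ℝ) ^ (1 - 1 / (k : ℝ)))
    (hRmax : ∀ u : V, ∀ R' : ℝ≥0∞, R u < R' →
      (Fintype.card V : ℝ) ^ (1 - 1 / (k : ℝ))
        ≤ ((Finset.univ.filter fun v : V => rtdist wt Set.univ u v < R').card : ℝ))
    (T : ℕ) (U : ℕ → Finset V) (c : ℕ → V) (h : ℕ → ℕ) (step : ℕ → ℝ≥0∞)
    (hU0 : U 0 = Finset.univ) (hUT : U T = ∅)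
    (hc : ∀ i < T, c i ∈ U i ∧ ∀ x ∈ U i, R x ≤ R (c i))
    (hstep : ∀ i < T, step i = min (R (c i) / (((k : ℝ≥0∞)) - 1)) L)
    (hh : ∀ i < T, 1 ≤ h i ∧
      (((U i).filter fun v : V =>
          rtdist wt (U i : Set V) (c i) v < (h i : ℝ≥0∞) * step i).card : ℝ)
        < (Fintype.card V : ℝ) ^ ((h i : ℝ) / (k : ℝ)) ∧
      ∀ j : ℕ, 1 ≤ j → j < h i →
        (Fintype.card V : ℝ) ^ ((j : ℝ) / (k : ℝ))
          ≤ (((U i).filter fun v : V =>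
              rtdist wt (U i : Set V) (c i) v < (j : ℝ≥0∞) * step i).card : ℝ))
    (hrem : ∀ i < T, U (i + 1)
      = U i \ ((U i).filter fun v : V =>
          rtdist wt (U i : Set V) (c i) v ≤ ((h i - 1 : ℕ) : ℝ≥0∞) * step i))
    (Eh : Set (V × V))
    (hEh : ∀ i < T, ∀ x ∈ U i,
      rtdist wt (U i : Set V) (c i) x < (h i : ℝ≥0∞) * step i →
        owdist (restrictE wt Eh) Set.univ (c i) x ≤ owdist wt (U i : Set V) (c i) x ∧
        owdist (restrictE wt Eh) Set.univ x (c i) ≤ owdist wt (U i : Set V) x (c i)) :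
    ∀ u v : V,
      L / (1 + (ε : ℝ≥0∞)) ≤ rtdist wt Set.univ u v →
      rtdist wt Set.univ u v < L →
      rtdist (restrictE wt Eh) Set.univ u v
          ≤ ((2 * k - 2 : ℕ) : ℝ≥0∞) * (1 + (ε : ℝ≥0∞)) * rtdist wt Set.univ u v ∨
      R u ≤ ((k - 1 : ℕ) : ℝ≥0∞) * rtdist wt Set.univ u v :=
  cover_stretch_general wt k hk L ε R hRball T U c h step hU0 hUT hc hstep hh hrem Eh hEh
end
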